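/- arXiv:1911.02607 — 5 statements merged into one kernel-verified Lean document; each statement's English description precedes it below -/
import Mathlib

section
/- For the airtime cost sharing: if the power requests received by a parent node j from its M child nodes are sorted as 0 = p_0 ≤ p_1 ≤ ... ≤ p_M, then the Shapley value cost share of the k-th child (with respect to the radio-link cost function P(S) = max of requests in S) equals the telescoping sum ∑_{n=1}^{k} (p_n − p_{n−1})/(M + 1 − n). -/
open Finset

/-- Shapley value of player `i` for coalition cost function `P` on `M` players. -/
noncomputable def shapley (M : ℕ) (P : Finset (Fin M) → ℝ) (i : Fin M) : ℝ :=
  ∑ S ∈ (Finset.univ.erase i).powerset,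
    ((Nat.factorial S.card * Nat.factorial (M - S.card - 1) : ℕ) : ℝ) / (Nat.factorial M : ℝ)
      * (P (insert i S) - P S)

/-- Radio-link cost of a coalition: the maximum request in it (0 for the empty coalition). -/
noncomputable def maxCost (M : ℕ) (r : Fin M → ℝ) (S : Finset (Fin M)) : ℝ :=
  if h : S.Nonempty then S.sup' h r else 0

/-!
Since the requests are monotone in the index, the cost of a coalition whose largest index is `m`
is `p_{m+1} = ∑_{n ≤ m} (p_{n+1} - p_n)`. Hence the max cost is the combination, with weights
`p_{n+1} - p_n`, of the games `tailIndicator M n` (cost 1 iff the coalition contains a child of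
index at least `n`), and by linearity it suffices to find the Shapley values of these games.
For `k < n` child `k` is a null player. For `n ≤ k` its marginal contribution to `S` is 1 exactly
when `S ⊆ {i < n}`, whence its value is `∑_s C(n,s) s! (M-s-1)! / M! = 1 / (M - n)`.
-/

open scoped Nat

theorem sum_choose_mul_factorial_mul_factorial {M n : ℕ} (hn : n < M) :
    ∑ s ∈ range (n + 1), (n.choose s * s ! * (M - s - 1)! : ℝ) = M ! / (M - n) := by
  have hMn : (0 : ℝ) < M - n := sub_pos.2 (by exact_mod_cast hn)
  rw [eq_div_iff hMn.ne']
  -- Telescope with `G s = n.descFactorial s * (M - s)!`, using `C(n, s) * s! = n.descFactorial s`.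
  set G : ℕ → ℝ := fun s => n.descFactorial s * (M - s)!
  have hstep : ∀ s ∈ range (n + 1),
      (n.choose s * s ! * (M - s - 1)! : ℝ) * (M - n) = G s - G (s + 1) := by
    intro s hs
    have hsn : s ≤ n := Nat.lt_succ_iff.mp (mem_range.mp hs)
    have hfac : (M - s)! = (M - s) * (M - s - 1)! := by
      rw [← Nat.mul_factorial_pred (by omega : M - s ≠ 0)]
    simp only [G, Nat.descFactorial_succ, show M - (s + 1) = M - s - 1 by omega, hfac]
    rw [Nat.descFactorial_eq_factorial_mul_choose]
    push_cast [Nat.cast_sub hsn, Nat.cast_sub (hsn.trans hn.le)]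
    ring
  rw [sum_mul, sum_congr rfl hstep, sum_range_sub']
  simp [G]

section Shapley

variable {M : ℕ}

theorem shapley_sum_mul {ι : Type*} (s : Finset ι) (c : ι → ℝ) (P : ι → Finset (Fin M) → ℝ)
    (i : Fin M) :
    shapley M (fun S => ∑ n ∈ s, c n * P n S) i = ∑ n ∈ s, c n * shapley M (P n) i := by
  simp only [shapley, ← sum_sub_distrib, ← mul_sub, mul_sum]
  rw [sum_comm]
  exact sum_congr rfl fun n _ => sum_congr rfl fun S _ => by ring

def lowerIndices (M n : ℕ) : Finset (Fin M) := univ.filter fun i => (i : ℕ) < n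

theorem card_lowerIndices {n : ℕ} (hn : n ≤ M) : #(lowerIndices M n) = n := by
  simp [lowerIndices, Fin.card_filter_val_lt, hn]

def tailIndicator (M n : ℕ) (S : Finset (Fin M)) : ℝ :=
  if S ⊆ lowerIndices M n then 0 else 1

theorem shapley_tailIndicator_of_lt {n : ℕ} {k : Fin M} (hk : (k : ℕ) < n) :
    shapley M (tailIndicator M n) k = 0 := by
  have hkL : k ∈ lowerIndices M n := by simp [lowerIndices, hk]
  refine sum_eq_zero fun S _ => ?_
  simp only [tailIndicator, insert_subset_iff, hkL, true_and, sub_self, mul_zero]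

theorem shapley_tailIndicator_of_le {n : ℕ} {k : Fin M} (hk : n ≤ k) :
    shapley M (tailIndicator M n) k = 1 / (M - n) := by
  have hnM : n < M := hk.trans_lt k.isLt
  have hkL : k ∉ lowerIndices M n := by simp [lowerIndices, hk]
  have hmarg : ∀ S, tailIndicator M n (insert k S) - tailIndicator M n S
      = if S ∈ (lowerIndices M n).powerset then 1 else 0 := by
    intro S
    by_cases hS : S ⊆ lowerIndices M n <;> simp [tailIndicator, insert_subset_iff, hkL, hS]
  calc shapley M (tailIndicator M n) k
      = ∑ S ∈ (lowerIndices M n).powerset, (((#S)! * (M - #S - 1)! : ℕ) : ℝ) / M ! := by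
        simp only [shapley, hmarg, mul_ite, mul_one, mul_zero]
        rw [sum_ite_mem, inter_eq_right.2 (powerset_mono.2 fun i hi => mem_erase.2
          ⟨by rintro rfl; exact hkL hi, mem_univ i⟩)]
    _ = (∑ s ∈ range (n + 1), (n.choose s * s ! * (M - s - 1)! : ℝ)) / M ! := by
        rw [sum_powerset_apply_card fun c => ((c ! * (M - c - 1)! : ℕ) : ℝ) / M !,
          card_lowerIndices hnM.le, sum_div]
        push_cast
        simp only [nsmul_eq_mul, mul_div_assoc, mul_assoc]
    _ = 1 / (M - n) := by
        rw [sum_choose_mul_factorial_mul_factorial hnM, div_right_comm,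
          div_self (by positivity)]

theorem maxCost_eq_max' {r : Fin M → ℝ} (hr : Monotone r) {S : Finset (Fin M)}
    (hS : S.Nonempty) : maxCost M r S = r (S.max' hS) := by
  rw [maxCost, dif_pos hS, max'_eq_sup', apply_sup'_eq_sup'_comp hS r fun _ _ => hr.map_sup _ _]
  rfl

theorem tailIndicator_eq_ite {S : Finset (Fin M)} (hS : S.Nonempty) (n : ℕ) :
    tailIndicator M n S = if n ≤ (S.max' hS : ℕ) then 1 else 0 := by
  have : S ⊆ lowerIndices M n ↔ (S.max' hS : ℕ) < n :=
    ⟨fun h => (mem_filter.1 (h (max'_mem S hS))).2,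
      fun h i hi => mem_filter.2 ⟨mem_univ i, Nat.lt_of_le_of_lt (le_max' S i hi) h⟩⟩
  simp only [tailIndicator, this, ← not_le, ite_not]

theorem maxCost_eq_sum_tailIndicator {p : ℕ → ℝ} (hp0 : p 0 = 0)
    (hp : Monotone fun i : Fin M => p (i + 1)) (S : Finset (Fin M)) :
    maxCost M (fun i => p (i + 1)) S
      = ∑ n ∈ range M, (p (n + 1) - p n) * tailIndicator M n S := by
  rcases S.eq_empty_or_nonempty with rfl | hS
  · simp [maxCost, tailIndicator]
  · set m := S.max' hS
    calc maxCost M (fun i => p (i + 1)) S = p (m + 1) - p 0 := by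
          rw [maxCost_eq_max' hp hS, hp0, sub_zero]
      _ = ∑ n ∈ range (m + 1), (p (n + 1) - p n) := (sum_range_sub p _).symm
      _ = ∑ n ∈ range M, (p (n + 1) - p n) * tailIndicator M n S := by
          simp only [tailIndicator_eq_ite hS, mul_ite, mul_one, mul_zero]
          rw [← sum_filter]
          congr 1
          ext n
          simp only [mem_range, mem_filter]
          omega

end Shapley

/-- Children are 0-indexed: child `k` carries the request `p (k + 1)`. -/
theorem shapley_max_telescoping_general (M : ℕ) (p : ℕ → ℝ)
    (hp0 : p 0 = 0)
    (hmono : ∀ a b, a ≤ b → b ≤ M → p a ≤ p b) (k : Fin M) :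
    shapley M (maxCost M (fun i => p (i.1 + 1))) k
      = ∑ n ∈ Finset.range (k.1 + 1), (p (n + 1) - p n) / ((M : ℝ) - n) := by
  have hp : Monotone fun i : Fin M => p (i + 1) :=
    fun a b hab => hmono _ _ (Nat.succ_le_succ hab) b.isLt
  calc shapley M (maxCost M (fun i => p (i.1 + 1))) k
      = ∑ n ∈ range M, (p (n + 1) - p n) * shapley M (tailIndicator M n) k := by
        rw [funext (maxCost_eq_sum_tailIndicator hp0 hp), shapley_sum_mul]
    _ = ∑ n ∈ range (k + 1), (p (n + 1) - p n) * shapley M (tailIndicator M n) k := by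
        refine (sum_subset (range_subset_range.2 k.isLt) fun n _ hn => ?_).symm
        rw [shapley_tailIndicator_of_lt (by simpa using hn), mul_zero]
    _ = _ := sum_congr rfl fun n hn => by
        rw [shapley_tailIndicator_of_le (Nat.lt_succ_iff.1 (mem_range.1 hn)), mul_one_div]

/-- The Shapley value of the k-th child (0-indexed, representing the (k+1)-th request)
for the max cost function equals the telescoping sum `∑_{n=1}^{k+1} (p_n - p_{n-1})/(M+1-n)`. -/
theorem shapley_max_telescoping (M : ℕ) (p : ℕ → ℝ)
    (hp0 : p 0 = 0) (hnonneg : ∀ n, 0 ≤ p n)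
    (hmono : ∀ a b, a ≤ b → b ≤ M → p a ≤ p b) (k : Fin M) :
    shapley M (maxCost M (fun i => p (i.1 + 1))) k
      = ∑ n ∈ Finset.range (k.1 + 1), (p (n + 1) - p n) / ((M : ℝ) - n) :=
  shapley_max_telescoping_general M p hp0 hmono k
end

section
/- The Shapley share of the (n+1)-th smallest request, written as a function of that request p, equals p/(M − n) − ∑_{k=1}^{n} p_k / ((M − k)(M − k + 1)). Consequently, as a function of p (over the interval where p remains the (n+1)-th smallest request), the Shapley share is linear with slope 1/(M − n); and since the slope 1/(M − n) is increasing in n while the y-intercept decreases (each added term is negative), the Shapley share as a function of p over [0, ∞) is a piecewise-linear, monotonically nondecreasing, continuous function of p. -/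
/-!
Adding player `i` to a coalition `S` raises the maximal request by `max (r i - max S) 0`
(by `r i` if `S = ∅`). Hence only coalitions of players `B` with smaller requests contribute,
and the share is `r i * W B - ∑_{S ⊆ B} w |S| * max S`, where `W B = ∑_{S ⊆ B} w |S|`.
That `W B = 1/(M - |B|)` follows from the Pascal-type recurrence
`w_{M+1} s + w_{M+1} (s+1) = w_M s`.
Adding the players of `B` in increasing order of request, the `k`-th one contributes
`q_k * (W B_k - W B_{k-1})`. Monotonicity and continuity in `p` hold for any requests, since each
marginal contribution `max p (max S) - max S` is monotone and continuous in `p`.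
-/

open Finset

noncomputable def shapleyWeight (M s : ℕ) : ℝ :=
  ((Nat.factorial s * Nat.factorial (M - s - 1) : ℕ) : ℝ) / (Nat.factorial M : ℝ)

lemma shapleyWeight_nonneg (M s : ℕ) : 0 ≤ shapleyWeight M s := by
  unfold shapleyWeight; positivity

lemma shapleyWeight_zero {M : ℕ} (hM : 0 < M) : shapleyWeight M 0 = 1 / M := by
  obtain ⟨M, rfl⟩ := Nat.exists_eq_add_of_lt hM
  simp [shapleyWeight, Nat.factorial_succ]
  field_simp

lemma shapleyWeight_add_shapleyWeight_succ {M s : ℕ} (h : s < M) :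
    shapleyWeight (M + 1) s + shapleyWeight (M + 1) (s + 1) = shapleyWeight M s := by
  obtain ⟨k, rfl⟩ := Nat.exists_eq_add_of_lt h
  have e1 : s + k + 1 + 1 - s - 1 = k + 1 := by omega
  have e2 : s + k + 1 + 1 - (s + 1) - 1 = k := by omega
  have e3 : s + k + 1 - s - 1 = k := by omega
  simp only [shapleyWeight, e1, e2, e3, Nat.factorial_succ, Nat.cast_mul, Nat.cast_add,
    Nat.cast_one]
  field_simp
  ring

theorem sum_powerset_shapleyWeight {α : Type*} [DecidableEq α] (B : Finset α) {M : ℕ}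
    (hB : #B < M) : ∑ S ∈ B.powerset, shapleyWeight M #S = 1 / ((M : ℝ) - #B) := by
  induction B using Finset.induction_on generalizing M with
  | empty => simpa using shapleyWeight_zero hB
  | insert x B hx ih =>
    rw [card_insert_of_notMem hx] at hB ⊢
    obtain ⟨M, rfl⟩ : ∃ M', M = M' + 1 := ⟨M - 1, by omega⟩
    have hpascal : ∀ T ∈ B.powerset,
        shapleyWeight (M + 1) #T + shapleyWeight (M + 1) #(insert x T) = shapleyWeight M #T := by
      intro T hT
      rw [card_insert_of_notMem fun hxT => hx (mem_powerset.1 hT hxT)]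
      exact shapleyWeight_add_shapleyWeight_succ
        ((card_le_card (mem_powerset.1 hT)).trans_lt (by omega))
    rw [sum_powerset_insert hx, ← sum_add_distrib, sum_congr rfl hpascal, ih (by omega)]
    push_cast
    ring_nf

lemma shapley_eq_sum_shapleyWeight {M : ℕ} (P : Finset (Fin M) → ℝ) (i : Fin M) :
    shapley M P i =
      ∑ S ∈ (univ.erase i).powerset, shapleyWeight M #S * (P (insert i S) - P S) :=
  rfl

section maxCost

variable {M : ℕ} {r r' : Fin M → ℝ} {S : Finset (Fin M)} {i j : Fin M}

lemma maxCost_of_nonempty (hS : S.Nonempty) : maxCost M r S = S.sup' hS r := dif_pos hS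

lemma maxCost_congr (h : ∀ j ∈ S, r j = r' j) : maxCost M r S = maxCost M r' S := by
  unfold maxCost
  split_ifs with hS
  exacts [sup'_congr hS rfl h, rfl]

lemma le_maxCost (hj : j ∈ S) : r j ≤ maxCost M r S := by
  rw [maxCost_of_nonempty ⟨j, hj⟩]
  exact le_sup' r hj

lemma maxCost_insert (hS : S.Nonempty) : maxCost M r (insert i S) = r i ⊔ maxCost M r S := by
  rw [maxCost_of_nonempty (insert_nonempty i S), maxCost_of_nonempty hS, sup'_insert]

lemma maxCost_insert_of_le (h : ∀ j ∈ S, r j ≤ r i) : maxCost M r (insert i S) = r i := by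
  rw [maxCost_of_nonempty (insert_nonempty i S)]
  exact le_antisymm (sup'_le _ _ <| forall_mem_insert _ _ _ |>.2 ⟨le_rfl, h⟩)
    (le_sup' r (mem_insert_self i S))

lemma maxCost_insert_of_le_of_mem (hj : j ∈ S) (h : r i ≤ r j) :
    maxCost M r (insert i S) = maxCost M r S := by
  rw [maxCost_insert ⟨j, hj⟩, sup_eq_right]
  exact h.trans (le_maxCost hj)

lemma maxCost_update_insert (hi : i ∉ S) (p : ℝ) :
    maxCost M (Function.update r i p) (insert i S) =
      if S.Nonempty then p ⊔ maxCost M r S else p := by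
  have hS : maxCost M (Function.update r i p) S = maxCost M r S :=
    maxCost_congr fun j hj => Function.update_of_ne (ne_of_mem_of_not_mem hj hi) p r
  split_ifs with hne
  · rw [maxCost_insert hne, hS, Function.update_self]
  · rw [not_nonempty_iff_eq_empty.1 hne, insert_empty, maxCost_of_nonempty (singleton_nonempty i),
      sup'_singleton, Function.update_self]

end maxCost

section update

variable {M : ℕ} (r : Fin M → ℝ) (i : Fin M)

lemma shapley_maxCost_update (p : ℝ) :
    shapley M (maxCost M (Function.update r i p)) i =
      ∑ S ∈ (univ.erase i).powerset, shapleyWeight M #S *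
        ((if S.Nonempty then p ⊔ maxCost M r S else p) - maxCost M r S) := by
  rw [shapley_eq_sum_shapleyWeight]
  refine sum_congr rfl fun S hS => ?_
  have hi : i ∉ S := fun h => notMem_erase i univ (mem_powerset.1 hS h)
  rw [maxCost_update_insert hi,
    maxCost_congr fun j hj => Function.update_of_ne (ne_of_mem_of_not_mem hj hi) p r]

theorem monotone_shapley_maxCost_update :
    Monotone fun p => shapley M (maxCost M (Function.update r i p)) i := by
  intro a b hab
  simp only [shapley_maxCost_update]
  refine sum_le_sum fun S _ => mul_le_mul_of_nonneg_left ?_ (shapleyWeight_nonneg M #S)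
  split_ifs
  exacts [sub_le_sub_right (sup_le_sup_right hab _) _, sub_le_sub_right hab _]

theorem continuous_shapley_maxCost_update :
    Continuous fun p => shapley M (maxCost M (Function.update r i p)) i := by
  simp only [shapley_maxCost_update]
  refine continuous_finsetSum _ fun S _ => continuous_const.mul (Continuous.sub ?_ continuous_const)
  split_ifs
  exacts [continuous_id.sup continuous_const, continuous_id]

end update

theorem shapley_maxCost_eq_of_threshold {M : ℕ} (r : Fin M → ℝ) (i : Fin M)
    {B : Finset (Fin M)} (hB : B ⊆ univ.erase i) (hlow : ∀ j ∈ B, r j ≤ r i)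
    (hhigh : ∀ j ∈ univ.erase i, j ∉ B → r i ≤ r j) :
    shapley M (maxCost M r) i =
      r i / ((M : ℝ) - #B) - ∑ S ∈ B.powerset, shapleyWeight M #S * maxCost M r S := by
  have hcard : #B < M := by
    have := card_le_card hB
    rw [card_erase_of_mem (mem_univ i), card_univ, Fintype.card_fin] at this
    have := i.pos
    omega
  rw [shapley_eq_sum_shapleyWeight, ← sum_subset (powerset_mono.2 hB), div_eq_mul_one_div,
    ← sum_powerset_shapleyWeight B hcard, mul_sum, ← sum_sub_distrib]
  · refine sum_congr rfl fun S hS => ?_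
    rw [maxCost_insert_of_le fun j hj => hlow j (mem_powerset.1 hS hj)]
    ring
  · intro S hS hSB
    obtain ⟨j, hjS, hjB⟩ := not_subset.1 (mt mem_powerset.2 hSB)
    rw [maxCost_insert_of_le_of_mem hjS (hhigh j (mem_powerset.1 hS hjS) hjB), sub_self, mul_zero]

lemma sum_powerset_insert_shapleyWeight_mul_maxCost {M : ℕ} (r : Fin M → ℝ) {x : Fin M}
    {B : Finset (Fin M)} (hx : x ∉ B) (hB : #B + 1 < M) (hle : ∀ j ∈ B, r j ≤ r x) :
    ∑ S ∈ (insert x B).powerset, shapleyWeight M #S * maxCost M r S =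
      ∑ S ∈ B.powerset, shapleyWeight M #S * maxCost M r S
        + r x / (((M : ℝ) - (#B + 1)) * ((M : ℝ) - #B)) := by
  have hweight : ∑ T ∈ B.powerset, shapleyWeight M #(insert x T)
      = 1 / ((M : ℝ) - (#B + 1)) - 1 / ((M : ℝ) - #B) := by
    have h := sum_powerset_insert hx fun S => shapleyWeight M #S
    rw [sum_powerset_shapleyWeight _ (by rw [card_insert_of_notMem hx]; omega),
      sum_powerset_shapleyWeight _ (by omega), card_insert_of_notMem hx] at h
    push_cast at h
    linarith
  have h1 : (0 : ℝ) < M - (#B + 1) := by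
    rw [sub_pos]; exact_mod_cast hB
  have h2 : (0 : ℝ) < M - #B := by linarith
  have hnew : ∑ T ∈ B.powerset, shapleyWeight M #(insert x T) * maxCost M r (insert x T)
      = (∑ T ∈ B.powerset, shapleyWeight M #(insert x T)) * r x := by
    rw [sum_mul]
    refine sum_congr rfl fun T hT => ?_
    rw [maxCost_insert_of_le fun j hj => hle j (mem_powerset.1 hT hj)]
  rw [sum_powerset_insert hx, hnew, hweight]
  field_simp
  ring

/-- With player `j < M - 1` requesting `q (j + 1)`, these are the players with the `n` smallest
fixed requests. -/
def initialSegment (M n : ℕ) : Finset (Fin M) := {j | (j : ℕ) < n}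

@[simp]
lemma mem_initialSegment {M n : ℕ} {j : Fin M} : j ∈ initialSegment M n ↔ (j : ℕ) < n := by
  simp [initialSegment]

lemma card_initialSegment {M n : ℕ} (h : n ≤ M) : #(initialSegment M n) = n := by
  simp [initialSegment, Fin.card_filter_val_lt, h]

lemma initialSegment_succ {M n : ℕ} (h : n < M) :
    initialSegment M (n + 1) = insert ⟨n, h⟩ (initialSegment M n) := by
  ext j
  simp only [mem_initialSegment, mem_insert, Fin.ext_iff]
  omega

theorem sum_powerset_initialSegment_shapleyWeight_mul_maxCost {M : ℕ} {r : Fin M → ℝ}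
    {q : ℕ → ℝ} {n : ℕ} (hn : n < M) (hq : MonotoneOn q (Set.Iic n))
    (hr : ∀ j : Fin M, (j : ℕ) < n → r j = q (j + 1)) :
    ∑ S ∈ (initialSegment M n).powerset, shapleyWeight M #S * maxCost M r S =
      ∑ k ∈ range n, q (k + 1) / (((M : ℝ) - (k + 1)) * ((M : ℝ) - k)) := by
  induction n with
  | zero => simp [initialSegment, maxCost]
  | succ n ih =>
    have hx : (⟨n, by omega⟩ : Fin M) ∉ initialSegment M n := by simp
    have hle : ∀ j ∈ initialSegment M n, r j ≤ r ⟨n, by omega⟩ := by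
      intro j hj
      rw [mem_initialSegment] at hj
      rw [hr j (by omega), hr ⟨n, _⟩ (by simp)]
      exact hq (Set.mem_Iic.2 (by omega)) (Set.mem_Iic.2 le_rfl) (by simp; omega)
    rw [initialSegment_succ (by omega), sum_powerset_insert_shapleyWeight_mul_maxCost r hx
      (by rw [card_initialSegment]; all_goals omega) hle, ih (by omega)
      (hq.mono (Set.Iic_subset_Iic.2 n.le_succ)) (fun j hj => hr j (by omega)),
      sum_range_succ, card_initialSegment (by omega), hr _ (by simp)]

lemma update_eq_ite {M : ℕ} (q : ℕ → ℝ) {i : Fin M} (hi : (i : ℕ) = M - 1) (p : ℝ) :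
    Function.update (fun j : Fin M => q (j + 1)) i p =
      fun j : Fin M => if (j : ℕ) + 1 < M then q (j + 1) else p := by
  funext j
  by_cases hj : (j : ℕ) + 1 < M
  · rw [if_pos hj, Function.update_of_ne (Fin.ne_of_val_ne (by omega))]
  · rw [if_neg hj, show j = i from Fin.ext (by omega), Function.update_self]

theorem shapley_maxCost_update_of_rank {M : ℕ} {q : ℕ → ℝ}
    (hq : MonotoneOn q (Set.Iic (M - 1))) {i : Fin M} (hi : (i : ℕ) = M - 1) {n : ℕ}
    (hn : n ≤ M - 1) {p : ℝ} (hpn : q n ≤ p) (hpn1 : n + 1 ≤ M - 1 → p ≤ q (n + 1)) :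
    shapley M (maxCost M (Function.update (fun j : Fin M => q (j + 1)) i p)) i =
      p / ((M : ℝ) - n)
        - ∑ k ∈ range n, q (k + 1) / (((M : ℝ) - (k + 1)) * ((M : ℝ) - k)) := by
  set r₀ : Fin M → ℝ := fun j => q (j + 1)
  set r := Function.update r₀ i p
  have hr : ∀ j : Fin M, (j : ℕ) < M - 1 → r j = q (j + 1) := fun j hj =>
    Function.update_of_ne (show j ≠ i from Fin.ne_of_val_ne (by omega)) p r₀
  have hri : r i = p := Function.update_self i p r₀
  have hseg : initialSegment M n ⊆ univ.erase i := by
    intro j hj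
    rw [mem_initialSegment] at hj
    exact mem_erase.2 ⟨fun h => by rw [h] at hj; omega, mem_univ j⟩
  rw [shapley_maxCost_eq_of_threshold r i hseg, card_initialSegment (by omega), hri,
    sum_powerset_initialSegment_shapleyWeight_mul_maxCost (by omega)
      (hq.mono (Set.Iic_subset_Iic.2 hn)) fun j hj => hr j (by omega)]
  · intro j hj
    rw [mem_initialSegment] at hj
    rw [hr j (by omega), hri]
    exact (hq (Set.mem_Iic.2 (by omega)) (Set.mem_Iic.2 hn) (by omega)).trans hpn
  · intro j hj hjn
    rw [mem_initialSegment, not_lt] at hjn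
    have hji : (j : ℕ) < M - 1 := by
      have := j.isLt
      have : (j : ℕ) ≠ i := fun h => (mem_erase.1 hj).1 (Fin.ext h)
      omega
    rw [hr j hji, hri]
    exact (hpn1 (by omega)).trans (hq (Set.mem_Iic.2 (by omega)) (Set.mem_Iic.2 (by omega))
      (by omega))

theorem shapley_share_piecewise_linear_general (M : ℕ) (hM : 1 ≤ M) (q : ℕ → ℝ)
    (hqmono : ∀ a b, a ≤ b → b ≤ M - 1 → q a ≤ q b) :
    let F : ℝ → ℝ := fun p =>
      shapley M (maxCost M (fun j => if j.1 + 1 < M then q (j.1 + 1) else p))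
        ⟨M - 1, Nat.sub_lt hM one_pos⟩
    (∀ (n : ℕ) (p : ℝ), n ≤ M - 1 → q n ≤ p → (n + 1 ≤ M - 1 → p ≤ q (n + 1)) →
        F p = p / ((M : ℝ) - n)
          - ∑ k ∈ Finset.range n, q (k + 1) / (((M : ℝ) - (k + 1)) * ((M : ℝ) - k)))
      ∧ MonotoneOn F (Set.Ici 0) ∧ ContinuousOn F (Set.Ici 0) := by
  intro F
  set i : Fin M := ⟨M - 1, Nat.sub_lt hM one_pos⟩
  have hF : F = fun p =>
      shapley M (maxCost M (Function.update (fun j : Fin M => q (j + 1)) i p)) i := by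
    funext p
    rw [update_eq_ite q (i := i) rfl]
  rw [hF]
  exact ⟨fun n p hn hpn hpn1 => shapley_maxCost_update_of_rank
      (fun a _ b hb hab => hqmono a b hab hb) rfl hn hpn hpn1,
    (monotone_shapley_maxCost_update _ i).monotoneOn _,
    (continuous_shapley_maxCost_update _ i).continuousOn⟩

/-- With the other `M-1` requests `q 1 ≤ ... ≤ q (M-1)` fixed, the Shapley share of
player `i` as a function `F` of its own request `p` satisfies: whenever `p` is the
`(n+1)`-th smallest request (`q n ≤ p ≤ q (n+1)`), it equals the linear function
`p/(M-n) - ∑_{k=1}^{n} q_k/((M-k)(M-k+1))`; moreover `F` is a monotonically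
nondecreasing, continuous (piecewise-linear) function of `p` on `[0, ∞)`. -/
theorem shapley_share_piecewise_linear (M : ℕ) (hM : 1 ≤ M) (q : ℕ → ℝ) (hq0 : q 0 = 0)
    (hqnn : ∀ n, 0 ≤ q n) (hqmono : ∀ a b, a ≤ b → b ≤ M - 1 → q a ≤ q b) :
    let F : ℝ → ℝ := fun p =>
      shapley M (maxCost M (fun j => if j.1 + 1 < M then q (j.1 + 1) else p))
        ⟨M - 1, Nat.sub_lt hM one_pos⟩
    (∀ (n : ℕ) (p : ℝ), n ≤ M - 1 → q n ≤ p → (n + 1 ≤ M - 1 → p ≤ q (n + 1)) →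
        F p = p / ((M : ℝ) - n)
          - ∑ k ∈ Finset.range n, q (k + 1) / (((M : ℝ) - (k + 1)) * ((M : ℝ) - k)))
      ∧ MonotoneOn F (Set.Ici 0) ∧ ContinuousOn F (Set.Ici 0) :=
  shapley_share_piecewise_linear_general M hM q hqmono
end

section
/- If a finite game is an exact potential game when each player's action is restricted to a single component, and each player's cost function is linearly separable across components (the cost is a sum over components of per-component costs), then the game where players choose several components simultaneously is also an exact potential game: for any player changing its multi-component action, the change in its total cost equals the change in the (summed) potential. -/
/-- If a game is an exact potential game for single-component (per-parent) deviations,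
each per-component cost `c j i` depends only on the `j`-components of the profile, and
each player's cost is linearly separable (a sum over components), then the game where a
player may change several components simultaneously is also an exact potential game:
for any unilateral multi-component deviation by player `i`, the change in its total cost
equals the change in the potential. -/
theorem multi_component_exact_potential {ι J : Type*} [Fintype J] [DecidableEq ι]
    [DecidableEq J]
    (c : J → ι → (ι → J → Option ℝ) → ℝ)   -- per-component cost of each player
    (Φ : (ι → J → Option ℝ) → ℝ)           -- per-component exact potential
    (hlocal : ∀ (j : J) (i : ι) (a a' : ι → J → Option ℝ),
      (∀ i', a' i' j = a i' j) → c j i a' = c j i a)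
    (hpot : ∀ (j : J) (i : ι) (a a' : ι → J → Option ℝ),
      (∀ i' j', (i' ≠ i ∨ j' ≠ j) → a' i' j' = a i' j') →
      c j i a' - c j i a = Φ a' - Φ a) :
    ∀ (i : ι) (a a' : ι → J → Option ℝ), (∀ i', i' ≠ i → a' i' = a i') →
      (∑ j, c j i a') - (∑ j, c j i a) = Φ a' - Φ a := by
  intro i a a' hoff
  -- hybrid profile: player i uses a' on components in s, a elsewhere; others use a
  set h : Finset J → ι → J → Option ℝ :=
    fun s i' j => if i' = i ∧ j ∈ s then a' i j else a i' j with hdef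
  have hcol : ∀ (s : Finset J) (j : J), (j ∈ s → ∀ i', h s i' j = a' i' j) ∧
      (j ∉ s → ∀ i', h s i' j = a i' j) := by
    intro s j
    constructor
    · intro hj i'
      by_cases hi : i' = i
      · simp [hdef, hi, hj]
      · simp [hdef, hi, hoff i' hi]
    · intro hj i'
      simp [hdef, hj]
  have key : ∀ s : Finset J,
      Φ (h s) - Φ (h ∅) = ∑ j ∈ s, (c j i a' - c j i a) := by
    intro s
    induction s using Finset.induction_on with
    | empty => simp
    | @insert j s hj ih =>
      rw [Finset.sum_insert hj, ← ih]
      have hstep : c j i (h (insert j s)) - c j i (h s)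
          = Φ (h (insert j s)) - Φ (h s) := by
        apply hpot
        intro i' j' hne
        by_cases hi : i' = i
        · rcases hne with hne | hne
          · exact absurd hi hne
          · simp [hdef, hi, Finset.mem_insert, hne]
        · simp [hdef, hi]
      have h1 : c j i (h (insert j s)) = c j i a' :=
        hlocal j i a' _ ((hcol (insert j s) j).1 (Finset.mem_insert_self j s))
      have h2 : c j i (h s) = c j i a :=
        hlocal j i a _ ((hcol s j).2 hj)
      rw [h1, h2] at hstep
      linarith
  have hempty : h ∅ = a := by
    funext i' j; simp [hdef]
  have huniv : h Finset.univ = a' := by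
    funext i' j
    by_cases hi : i' = i
    · simp [hdef, hi]
    · simp [hdef, hi, hoff i' hi]
  have := key Finset.univ
  rw [hempty, huniv, Finset.sum_sub_distrib] at this
  linarith
end

section
/- Every finite exact potential game possesses at least one pure-strategy Nash equilibrium, and any best-response improvement path terminates at a Nash equilibrrium in finitely many steps. -/
/-- Every finite exact potential game possesses a pure-strategy Nash equilibrium, and
there is no infinite (best-response) improvement path: every strict improvement path
terminates (at a Nash equilibrium) after finitely many steps. -/
theorem finite_exact_potential_game_has_NE {ι : Type*} [Fintype ι] [DecidableEq ι]
    (A : ι → Type*) [∀ i, Fintype (A i)] [∀ i, Nonempty (A i)]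
    (C : ι → (∀ i, A i) → ℝ) (Φ : (∀ i, A i) → ℝ)
    (hpot : ∀ (i : ι) (a : ∀ i, A i) (b : A i),
      C i (Function.update a i b) - C i a = Φ (Function.update a i b) - Φ a) :
    (∃ a : ∀ i, A i, ∀ (i : ι) (b : A i), C i a ≤ C i (Function.update a i b))
      ∧ ¬ ∃ s : ℕ → (∀ i, A i), ∀ n, ∃ i : ι,
          s (n + 1) = Function.update (s n) i (s (n + 1) i)
            ∧ C i (s (n + 1)) < C i (s n) := by
  constructor
  · obtain ⟨a, -, ha⟩ := Finset.exists_min_image Finset.univ Φ ⟨Classical.arbitrary _, Finset.mem_univ _⟩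
    refine ⟨a, fun i b => ?_⟩
    have h := hpot i a b
    have h2 := ha (Function.update a i b) (Finset.mem_univ _)
    linarith
  · rintro ⟨s, hs⟩
    have hdec : StrictAnti (fun n => Φ (s n)) := by
      apply strictAnti_nat_of_succ_lt
      intro n
      obtain ⟨i, heq, hlt⟩ := hs n
      have h := hpot i (s n) (s (n + 1) i)
      rw [← heq] at h
      simpa using by linarith
    have hinj : Function.Injective (fun n => Φ (s n)) := hdec.injective
    have hfin : (Set.range fun n => Φ (s n)).Finite := by
      apply (Set.finite_range Φ).subset
      rintro x ⟨n, rfl⟩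
      exact ⟨s n, rfl⟩
    exact (Set.infinite_range_of_injective hinj) hfin
end

section
/- In a potential game with the marginal contribution cost sharing scheme where each player's cost equals the power it imposes on the network (reception circuitry power plus marginal transmit power of its chosen parents), the network total power function P^tot_net(a) = ∑_j P_j^tot(a) is an exact potential function: for any unilateral deviation by a player, the change in that player's MC cost equals the change in the network total power. -/
open Finset

section Aux
variable {ι : Type*} [Fintype ι] [DecidableEq ι]

private noncomputable def WsetD (a : ι → ι → ℝ) (i : ι) : Finset ι := Finset.univ.filter fun j => 0 < a i j
private noncomputable def MsetD (a : ι → ι → ℝ) (j : ι) : Finset ι := Finset.univ.filter fun i => 0 < a i j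
private noncomputable def PTxD (pct : ι → ℝ) (a : ι → ι → ℝ) (j : ι) : ℝ :=
  if h : (MsetD a j).Nonempty then pct j + (MsetD a j).sup' h (fun i => a i j) else 0
private noncomputable def PnetD (pct pcr : ι → ℝ) (a : ι → ι → ℝ) : ℝ :=
  ∑ j, (PTxD pct a j + (WsetD a j).card * pcr j)

private lemma keyMC (pct pcr : ι → ℝ) (i : ι) (c : ι → ι → ℝ) :
    (WsetD c i).card * pcr i
      + ∑ j ∈ WsetD c i, (PTxD pct c j - PTxD pct (Function.update c i fun _ => 0) j)
    = PnetD pct pcr c - PnetD pct pcr (Function.update c i fun _ => 0) := by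
  set d := Function.update c i (fun _ => 0) with hd
  have hdi : ∀ y, d i y = 0 := by simp [hd]
  have hdx : ∀ x, x ≠ i → d x = c x := by
    intro x hx; simp [hd, Function.update_of_ne hx]
  have hWi : WsetD d i = ∅ := by
    simp [WsetD, hdi]
  have hWx : ∀ x, x ≠ i → WsetD d x = WsetD c x := by
    intro x hx; simp [WsetD, hdx x hx]
  have hPT : ∀ j, j ∉ WsetD c i → PTxD pct d j = PTxD pct c j := by
    intro j hj
    have hcij : ¬ 0 < c i j := by simpa [WsetD] using hj
    have hM : MsetD d j = MsetD c j := by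
      ext k
      rcases eq_or_ne k i with rfl | hk
      · simp [MsetD, hdi, hcij]
      · simp [MsetD, hdx k hk]
    have hval : ∀ k ∈ MsetD c j, d k j = c k j := by
      intro k hk
      have hk' : 0 < c k j := by simpa [MsetD] using hk
      have hki : k ≠ i := by rintro rfl; exact hcij hk'
      rw [hdx k hki]
    rw [PTxD, PTxD, hM]
    by_cases h : (MsetD c j).Nonempty
    · rw [dif_pos h, dif_pos h]
      congr 1
      exact Finset.sup'_congr h rfl hval
    · rw [dif_neg h, dif_neg h]
  have h1 : ∑ j ∈ WsetD c i, (PTxD pct c j - PTxD pct d j)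
      = ∑ j : ι, (PTxD pct c j - PTxD pct d j) := by
    refine Finset.sum_subset (Finset.subset_univ _) ?_
    intro j _ hj
    rw [hPT j hj]; ring
  have h2 : ∑ j : ι, ((WsetD c j).card * pcr j - (WsetD d j).card * pcr j)
      = (WsetD c i).card * pcr i := by
    rw [Finset.sum_eq_single_of_mem i (Finset.mem_univ i)]
    · rw [hWi]; simp
    · intro j _ hj
      rw [hWx j hj]; ring
  rw [h1]
  rw [PnetD, PnetD, ← Finset.sum_sub_distrib]
  rw [← h2, ← Finset.sum_add_distrib]
  apply Finset.sum_congr rfl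
  intro j _
  ring

end Aux

/-- For the marginal-contribution cost sharing scheme, where each player's cost is the
power it imposes on the network (its reception circuitry power plus the marginal
transmit power of its chosen parents), the network total power
`P^tot_net(a) = ∑_j P_j^tot(a)` is an exact potential function: for any unilateral
deviation by a player, the change in its MC cost equals the change in the network
total power. -/
theorem network_power_is_exact_potential {ι : Type*} [Fintype ι] [DecidableEq ι]
    (pct pcr : ι → ℝ) (hct : ∀ j, 0 ≤ pct j) (hcr : ∀ j, 0 ≤ pcr j) :
    -- a profile `a : ι → ι → ℝ` gives the request `a i j ≥ 0` of child `i` to parent `j`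
    -- (`a i j = 0` means `j` is not chosen by `i`)
    let Wset : (ι → ι → ℝ) → ι → Finset ι := fun a i => Finset.univ.filter fun j => 0 < a i j
    let Mset : (ι → ι → ℝ) → ι → Finset ι := fun a j => Finset.univ.filter fun i => 0 < a i j
    let PTx : (ι → ι → ℝ) → ι → ℝ := fun a j =>
      if h : (Mset a j).Nonempty then pct j + (Mset a j).sup' h (fun i => a i j) else 0
    let Ptot : (ι → ι → ℝ) → ι → ℝ := fun a j => PTx a j + (Wset a j).card * pcr j
    let Pnet : (ι → ι → ℝ) → ℝ := fun a => ∑ j, Ptot a j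
    let C : ι → (ι → ι → ℝ) → ℝ := fun i a =>
      (Wset a i).card * pcr i
        + ∑ j ∈ Wset a i, (PTx a j - PTx (Function.update a i fun _ => 0) j)
    ∀ (i : ι) (a a' : ι → ι → ℝ), (∀ x y, 0 ≤ a x y) → (∀ x y, 0 ≤ a' x y) →
      (∀ i', i' ≠ i → a' i' = a i') →
      C i a' - C i a = Pnet a' - Pnet a := by
  intro Wset Mset PTx Ptot Pnet C i a a' ha ha' hupd
  have hb : Function.update a' i (fun _ => 0) = Function.update a i (fun _ => 0) := by
    funext x
    rcases eq_or_ne x i with rfl | hx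
    · simp
    · rw [Function.update_of_ne hx, Function.update_of_ne hx, hupd x hx]
  show ((WsetD a' i).card * pcr i
      + ∑ j ∈ WsetD a' i, (PTxD pct a' j - PTxD pct (Function.update a' i fun _ => 0) j))
    - ((WsetD a i).card * pcr i
      + ∑ j ∈ WsetD a i, (PTxD pct a j - PTxD pct (Function.update a i fun _ => 0) j))
    = PnetD pct pcr a' - PnetD pct pcr a
  rw [keyMC, keyMC, hb]
  ring
end
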